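/- Consider the chain complexes of abelian groups: A with A_1 = A_0 = ℤ and differential multiplication by 2; B with B_2 = B_1 = ℤ and differential multiplication by 4; C with C_2 = C_1 = ℤ and differential multiplication by 4; D with D_2 = ℤ (all other terms 0). Let f : A → B have sole nonzero component f_1 = 1 : A_1 → B_1, let g : B → C have g_2 = 2 and g_1 = 2, and let h : C → D have sole nonzero component h_2 = 2 : C_2 → D_2. Then f, g, h are chain maps, g∘f and h∘g are nullhomotopic, and for EVERY nullhomotopy S of g∘f and EVERY nullhomotopy T of h∘g, the Toda map φ(S,T) : ΣA → D is not chain homotopic to zero. (Hence the Toda bracket ⟨h,g,f⟩ does not vanish.) -/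

import Mathlib

/-! STATEMENT 17.  Chain complexes of abelian groups are encoded as families
`M r : ℤ → Type`, `(M r) m = Fin (r m) → ℤ` (so `r m` copies of `ℤ` in degree `m`),
with differentials `d m : (M r) (m+1) →ₗ[ℤ] (M r) m` given by integer matrices. -/

abbrev M (r : ℤ → ℕ) (m : ℤ) : Type := Fin (r m) → ℤ

/-- A has ℤ in degrees 0 and 1 -/
def rA : ℤ → ℕ := fun m => if m = 0 ∨ m = 1 then 1 else 0
/-- B has ℤ in degrees 1 and 2 -/
def rB : ℤ → ℕ := fun m => if m = 1 ∨ m = 2 then 1 else 0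
/-- C has ℤ in degrees 1 and 2 -/
def rC : ℤ → ℕ := fun m => if m = 1 ∨ m = 2 then 1 else 0
/-- D has ℤ in degree 2 only -/
def rD : ℤ → ℕ := fun m => if m = 2 then 1 else 0

/-- A = (ℤ --2--> ℤ) in degrees 1 → 0 -/
noncomputable def dA (m : ℤ) : M rA (m+1) →ₗ[ℤ] M rA m :=
  Matrix.mulVecLin (Matrix.of fun _ _ => if m = 0 then (2:ℤ) else 0)

/-- B = (ℤ --4--> ℤ) in degrees 2 → 1 -/
noncomputable def dB (m : ℤ) : M rB (m+1) →ₗ[ℤ] M rB m :=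
  Matrix.mulVecLin (Matrix.of fun _ _ => if m = 1 then (4:ℤ) else 0)

/-- C = (ℤ --4--> ℤ) in degrees 2 → 1 -/
noncomputable def dC (m : ℤ) : M rC (m+1) →ₗ[ℤ] M rC m :=
  Matrix.mulVecLin (Matrix.of fun _ _ => if m = 1 then (4:ℤ) else 0)

/-- D is concentrated in degree 2, so its differential is 0 -/
noncomputable def dD (m : ℤ) : M rD (m+1) →ₗ[ℤ] M rD m :=
  Matrix.mulVecLin (Matrix.of fun _ _ => (0:ℤ))

/-- f : A → B with sole nonzero component f₁ = 1 : A₁ → B₁ -/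
noncomputable def fm (m : ℤ) : M rA m →ₗ[ℤ] M rB m :=
  Matrix.mulVecLin (Matrix.of fun _ _ => if m = 1 then (1:ℤ) else 0)

/-- g : B → C with g₂ = 2 and g₁ = 2 -/
noncomputable def gm (m : ℤ) : M rB m →ₗ[ℤ] M rC m :=
  Matrix.mulVecLin (Matrix.of fun _ _ => if m = 2 ∨ m = 1 then (2:ℤ) else 0)

/-- h : C → D with sole nonzero component h₂ = 2 : C₂ → D₂ -/
noncomputable def hm (m : ℤ) : M rC m →ₗ[ℤ] M rD m :=
  Matrix.mulVecLin (Matrix.of fun _ _ => if m = 2 then (2:ℤ) else 0)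

/-! The Toda map is detected modulo 2 on the generator of `A₁`. The nullhomotopy equation of
`h ∘ g` in degree 2 reads `4 = 4 · T₁(1)`, so every nullhomotopy `T` has `T₁ = 1`. A nullhomotopy
`U` of `φ(S, T)` would give `2 · S₁(1) - T₁(1) = -2 · U₀(1)` on that generator, making `T₁(1)`
even. -/

section ConstantMatrix

variable {R : Type*} [CommSemiring R] {p q r : ℕ}

theorem mulVecLin_of_const_apply (c : R) (x : Fin q → R) (i : Fin p) :
    Matrix.mulVecLin (Matrix.of fun (_ : Fin p) (_ : Fin q) => c) x i = c * ∑ j, x j := by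
  simp [Matrix.mulVec, dotProduct, Finset.mul_sum]

theorem mulVecLin_of_const_apply_const (c a : R) :
    Matrix.mulVecLin (Matrix.of fun (_ : Fin p) (_ : Fin q) => c) (fun _ => a) =
      fun _ => (q : R) * (c * a) := by
  funext i
  simp [Matrix.mulVec, dotProduct]

theorem mulVecLin_of_const_comp (a b : R) :
    (Matrix.mulVecLin (Matrix.of fun (_ : Fin p) (_ : Fin q) => a)).comp
      (Matrix.mulVecLin (Matrix.of fun (_ : Fin q) (_ : Fin r) => b)) =
    Matrix.mulVecLin (Matrix.of fun (_ : Fin p) (_ : Fin r) => (q : R) * (a * b)) := by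
  rw [← Matrix.mulVecLin_mul]
  congr 1
  ext i j
  simp [Matrix.mul_apply]

theorem mulVecLin_of_const_add (a b : R) :
    Matrix.mulVecLin (Matrix.of fun (_ : Fin p) (_ : Fin q) => a) +
      Matrix.mulVecLin (Matrix.of fun (_ : Fin p) (_ : Fin q) => b) =
    Matrix.mulVecLin (Matrix.of fun (_ : Fin p) (_ : Fin q) => a + b) := by
  rw [← Matrix.mulVecLin_add]
  rfl

theorem mulVecLin_of_const_zero :
    Matrix.mulVecLin (Matrix.of fun (_ : Fin p) (_ : Fin q) => (0 : R)) = 0 :=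
  Matrix.mulVecLin_zero

end ConstantMatrix

theorem dD_eq_zero (m : ℤ) : dD m = 0 := mulVecLin_of_const_zero

theorem dA_comp_dA (m : ℤ) : (dA m).comp (dA (m+1)) = 0 := by
  rw [dA, dA, mulVecLin_of_const_comp, ← mulVecLin_of_const_zero]
  congr 1
  ext i j
  simp only [Matrix.of_apply]
  split_ifs <;> omega

theorem dB_comp_dB (m : ℤ) : (dB m).comp (dB (m+1)) = 0 := by
  rw [dB, dB, mulVecLin_of_const_comp, ← mulVecLin_of_const_zero]
  congr 1
  ext i j
  simp only [Matrix.of_apply]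
  split_ifs <;> omega

theorem dC_comp_dC (m : ℤ) : (dC m).comp (dC (m+1)) = 0 := by
  rw [dC, dC, mulVecLin_of_const_comp, ← mulVecLin_of_const_zero]
  congr 1
  ext i j
  simp only [Matrix.of_apply]
  split_ifs <;> omega

theorem dD_comp_dD (m : ℤ) : (dD m).comp (dD (m+1)) = 0 := by
  rw [dD_eq_zero, LinearMap.zero_comp]

theorem dB_comp_fm (m : ℤ) : (dB m).comp (fm (m+1)) = (fm m).comp (dA m) := by
  rw [dB, fm, fm, dA, mulVecLin_of_const_comp, mulVecLin_of_const_comp]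
  congr 1
  ext i j
  simp only [Matrix.of_apply]
  simp only [rA, rB]
  split_ifs <;> omega

theorem dC_comp_gm (m : ℤ) : (dC m).comp (gm (m+1)) = (gm m).comp (dB m) := by
  rw [dC, gm, gm, dB, mulVecLin_of_const_comp, mulVecLin_of_const_comp]
  congr 1
  ext i j
  simp only [Matrix.of_apply]
  simp only [rB, rC]
  split_ifs <;> omega

theorem dD_comp_hm (m : ℤ) : (dD m).comp (hm (m+1)) = (hm m).comp (dC m) := by
  rw [dD, hm, hm, dC, mulVecLin_of_const_comp, mulVecLin_of_const_comp]
  congr 1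
  ext i j
  simp only [Matrix.of_apply]
  simp only [rC, rD]
  split_ifs <;> omega

theorem exists_nullhomotopy_gm_comp_fm :
    ∃ S : ∀ t : ℤ, M rA t →ₗ[ℤ] M rC (t+1),
      ∀ t : ℤ, (gm (t+1)).comp (fm (t+1)) = (dC (t+1)).comp (S (t+1)) + (S t).comp (dA t) := by
  refine ⟨fun t => Matrix.mulVecLin (Matrix.of fun _ _ => if t = 0 then 1 else 0), fun t => ?_⟩
  simp only [gm, fm, dC, dA, mulVecLin_of_const_comp, mulVecLin_of_const_add]
  congr 1
  ext i j
  simp only [Matrix.of_apply]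
  simp only [rA, rB, rC]
  split_ifs <;> omega

theorem exists_nullhomotopy_hm_comp_gm :
    ∃ T : ∀ t : ℤ, M rB t →ₗ[ℤ] M rD (t+1),
      ∀ t : ℤ, (hm (t+1)).comp (gm (t+1)) = (dD (t+1)).comp (T (t+1)) + (T t).comp (dB t) := by
  refine ⟨fun t => Matrix.mulVecLin (Matrix.of fun _ _ => if t = 1 then 1 else 0), fun t => ?_⟩
  simp only [hm, gm, dD, dB, mulVecLin_of_const_comp, mulVecLin_of_const_add]
  congr 1
  ext i j
  simp only [Matrix.of_apply]
  simp only [rB, rC, rD]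
  split_ifs <;> omega

theorem nullhomotopy_hm_comp_gm_apply_one (T : ∀ t : ℤ, M rB t →ₗ[ℤ] M rD (t+1))
    (hT : ∀ t : ℤ, (hm (t+1)).comp (gm (t+1)) = (dD (t+1)).comp (T (t+1)) + (T t).comp (dB t)) :
    T 1 (fun _ => 1) = fun _ => 1 := by
  have hdB : dB 1 (fun _ => 1) = (4 : ℤ) • fun _ => 1 := by
    funext j
    simp only [dB, mulVecLin_of_const_apply_const, Pi.smul_apply, smul_eq_mul]
    simp [rB]
  funext i
  have h : hm (1+1) (gm (1+1) (fun _ => 1)) i =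
      dD (1+1) (T (1+1) (fun _ => 1)) i + T 1 (dB 1 (fun _ => 1)) i :=
    congrFun (LinearMap.congr_fun (hT 1) (fun _ => 1)) i
  simp only [hdB, map_smul, dD_eq_zero, LinearMap.zero_apply, hm, gm,
    mulVecLin_of_const_apply_const, Pi.smul_apply, smul_eq_mul, Pi.zero_apply] at h
  norm_num [rB, rC] at h
  omega

theorem two_dvd_of_toda_nullhomotopic (S : ∀ t : ℤ, M rA t →ₗ[ℤ] M rC (t+1))
    (T : ∀ t : ℤ, M rB t →ₗ[ℤ] M rD (t+1)) (U : ∀ t : ℤ, M rA t →ₗ[ℤ] M rD (t+1+1))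
    (hU : ∀ t : ℤ, (hm (t+1+1)).comp (S (t+1)) - (T (t+1)).comp (fm (t+1))
      = (dD (t+1+1)).comp (U (t+1)) - (U t).comp (dA t)) (i : Fin (rD (1+1))) :
    2 ∣ T 1 (fun _ => 1) i := by
  have hfm : fm 1 (fun _ => 1) = fun _ => 1 := by
    funext j
    simp only [fm, mulVecLin_of_const_apply_const]
    simp [rA]
  have hdA : dA 0 (fun _ => 1) = (2 : ℤ) • fun _ => 1 := by
    funext j
    simp only [dA, mulVecLin_of_const_apply_const, Pi.smul_apply, smul_eq_mul]
    simp [rA]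
  have h : hm (1+1) (S 1 (fun _ => 1)) i - T 1 (fm 1 (fun _ => 1)) i =
      dD (1+1) (U 1 (fun _ => 1)) i - U 0 (dA 0 (fun _ => 1)) i :=
    congrFun (LinearMap.congr_fun (hU 0) (fun _ => 1)) i
  simp only [hfm, hdA, map_smul, dD_eq_zero, LinearMap.zero_apply, hm,
    mulVecLin_of_const_apply, Pi.smul_apply, smul_eq_mul, Pi.zero_apply] at h
  norm_num at h
  omega

theorem toda_not_nullhomotopic (S : ∀ t : ℤ, M rA t →ₗ[ℤ] M rC (t+1))
    (T : ∀ t : ℤ, M rB t →ₗ[ℤ] M rD (t+1))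
    (hT : ∀ t : ℤ, (hm (t+1)).comp (gm (t+1)) = (dD (t+1)).comp (T (t+1)) + (T t).comp (dB t)) :
    ¬ ∃ U : ∀ t : ℤ, M rA t →ₗ[ℤ] M rD (t+1+1),
      ∀ t : ℤ, (hm (t+1+1)).comp (S (t+1)) - (T (t+1)).comp (fm (t+1))
        = (dD (t+1+1)).comp (U (t+1)) - (U t).comp (dA t) := by
  rintro ⟨U, hU⟩
  have h := two_dvd_of_toda_nullhomotopic S T U hU ⟨0, by decide⟩
  rw [nullhomotopy_hm_comp_gm_apply_one T hT] at h
  norm_num at h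

theorem statement17 :
    -- the four graded objects are chain complexes:
    (∀ m : ℤ, (dA m).comp (dA (m+1)) = 0) ∧ (∀ m : ℤ, (dB m).comp (dB (m+1)) = 0) ∧
    (∀ m : ℤ, (dC m).comp (dC (m+1)) = 0) ∧ (∀ m : ℤ, (dD m).comp (dD (m+1)) = 0) ∧
    -- f, g, h are chain maps:
    (∀ m : ℤ, (dB m).comp (fm (m+1)) = (fm m).comp (dA m)) ∧
    (∀ m : ℤ, (dC m).comp (gm (m+1)) = (gm m).comp (dB m)) ∧
    (∀ m : ℤ, (dD m).comp (hm (m+1)) = (hm m).comp (dC m)) ∧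
    -- g∘f is nullhomotopic:
    (∃ S : ∀ t : ℤ, M rA t →ₗ[ℤ] M rC (t+1),
      ∀ t : ℤ, (gm (t+1)).comp (fm (t+1)) = (dC (t+1)).comp (S (t+1)) + (S t).comp (dA t)) ∧
    -- h∘g is nullhomotopic:
    (∃ T : ∀ t : ℤ, M rB t →ₗ[ℤ] M rD (t+1),
      ∀ t : ℤ, (hm (t+1)).comp (gm (t+1)) = (dD (t+1)).comp (T (t+1)) + (T t).comp (dB t)) ∧
    -- for EVERY such S and T, the Toda map φ(S,T) : ΣA → D, with components
    -- φ out of (ΣA)_{t+1} = A_t given by h∘S − T∘f, is not chain homotopic to zero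
    -- (the suspension differential being −∂_A):
    (∀ (S : ∀ t : ℤ, M rA t →ₗ[ℤ] M rC (t+1)) (T : ∀ t : ℤ, M rB t →ₗ[ℤ] M rD (t+1)),
      (∀ t : ℤ, (gm (t+1)).comp (fm (t+1)) = (dC (t+1)).comp (S (t+1)) + (S t).comp (dA t)) →
      (∀ t : ℤ, (hm (t+1)).comp (gm (t+1)) = (dD (t+1)).comp (T (t+1)) + (T t).comp (dB t)) →
      ¬ ∃ U : ∀ t : ℤ, M rA t →ₗ[ℤ] M rD (t+1+1),
          ∀ t : ℤ, (hm (t+1+1)).comp (S (t+1)) - (T (t+1)).comp (fm (t+1))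
            = (dD (t+1+1)).comp (U (t+1)) - (U t).comp (dA t)) :=
  ⟨dA_comp_dA, dB_comp_dB, dC_comp_dC, dD_comp_dD, dB_comp_fm, dC_comp_gm, dD_comp_hm,
    exists_nullhomotopy_gm_comp_fm, exists_nullhomotopy_hm_comp_gm,
    fun S T _ hT => toda_not_nullhomotopic S T hT⟩
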